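/- Let Λ be an n-homogeneous algebra whose trivial extension ΔΛ is quadratic. Then ΔΛ ≅ ktQ/(tρ) where tρ = ρ ∪ ρ_M ∪ ρ_0; here ρ_M = {β_p ⊗ β_{p'} | p,p' ∈ M, t(p) = s(p')} and ρ_0 is any basis of the kernel of μ restricted to N = V⊗V_M ⊕ V_M⊗V. -/

import Mathlib

/- ## Core part A : quivers, paths, path spaces (possibly infinite quivers) -/

open scoped Classical BigOperators

namespace TEPP

/-- A quiver (possibly infinite): a set of vertices, a set of arrows,
and source/target maps. -/
structure Quiv where
  V : Type
  A : Type
  src : A → V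
  tgt : A → V

/-- `Q.IsPath i j l` : the list of arrows `l` (listed from the *last* arrow to
the *first* arrow, i.e. composition is read from right to left as for functions)
is a path from the vertex `i` to the vertex `j`. -/
inductive Quiv.IsPath (Q : Quiv) : Q.V → Q.V → List Q.A → Prop
  | nil (i : Q.V) : Q.IsPath i i []
  | cons {i j : Q.V} {l : List Q.A} (a : Q.A) (h : Q.IsPath i j l) (ha : Q.src a = j) :
      Q.IsPath i (Q.tgt a) (a :: l)

theorem Quiv.IsPath.append {Q : Quiv} {i j m : Q.V} {l l' : List Q.A}
    (h : Q.IsPath j m l) (h' : Q.IsPath i j l') : Q.IsPath i m (l ++ l') := by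
  induction h with
  | nil => simpa using h'
  | cons a _ ha ih => exact .cons a ih ha

theorem Quiv.IsPath.single {Q : Quiv} (a : Q.A) : Q.IsPath (Q.src a) (Q.tgt a) [a] :=
  .cons a (.nil _) rfl

/-- A quiver is acyclic if the only paths from a vertex to itself are trivial. -/
def Quiv.Acyclic (Q : Quiv) : Prop := ∀ (i : Q.V) (l : List Q.A), Q.IsPath i i l → l = []

/-- A path in a quiver, together with its source and target. -/
structure Quiv.PathIdx (Q : Quiv) where
  s : Q.V
  t : Q.V
  l : List Q.A
  isPath : Q.IsPath s t l

/-- Composition of paths (`p.comp q h` is "`p` after `q`"). -/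
def Quiv.PathIdx.comp {Q : Quiv} (p q : Q.PathIdx) (h : q.t = p.s) : Q.PathIdx :=
  ⟨q.s, p.t, p.l ++ q.l, p.isPath.append (h ▸ q.isPath)⟩

/-- The trivial path at a vertex. -/
def Quiv.trivIdx (Q : Quiv) (i : Q.V) : Q.PathIdx := ⟨i, i, [], .nil i⟩

/-- The path of length one given by an arrow. -/
def Quiv.arrIdx (Q : Quiv) (a : Q.A) : Q.PathIdx := ⟨Q.src a, Q.tgt a, [a], .single a⟩

variable (k : Type) [Field k]

/-- The `k`-vector space spanned by the paths of a quiver (the underlying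
space of the path algebra; for an infinite quiver this is an algebra with
local units). -/
def PathSpace (Q : Quiv) : Type := Q.PathIdx →₀ k

noncomputable instance (Q : Quiv) : AddCommGroup (PathSpace k Q) :=
  inferInstanceAs (AddCommGroup (Q.PathIdx →₀ k))
noncomputable instance (Q : Quiv) : Module k (PathSpace k Q) :=
  inferInstanceAs (Module k (Q.PathIdx →₀ k))

/-- The basis element of the path space given by a path. -/
noncomputable def pe {Q : Quiv} (p : Q.PathIdx) : PathSpace k Q := Finsupp.single p 1

/-- Multiplication of two basis paths: composition if they are composable, `0` otherwise. -/
noncomputable def peMul {Q : Quiv} (p q : Q.PathIdx) : PathSpace k Q :=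
  if h : q.t = p.s then pe k (p.comp q h) else 0

/-- The multiplication of the path space (concatenation of composable paths,
extended bilinearly). -/
noncomputable def psMul (Q : Quiv) : PathSpace k Q →ₗ[k] PathSpace k Q →ₗ[k] PathSpace k Q :=
  Finsupp.lsum k fun p => LinearMap.toSpanSingleton k _
    (Finsupp.lsum k fun q => LinearMap.toSpanSingleton k _ (peMul k p q))

/-- The coefficient-wise pairing on the path space, identifying it with its own
(graded) dual via the basis of paths: paths form an orthonormal family. -/
noncomputable def pair (Q : Quiv) : PathSpace k Q →ₗ[k] PathSpace k Q →ₗ[k] k :=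
  Finsupp.lsum k fun p => LinearMap.toSpanSingleton k _ (Finsupp.lapply p)

/-- The span of the paths from `i` to `j` of length `d`. -/
noncomputable def spanPaths (Q : Quiv) (i j : Q.V) (d : ℕ) : Submodule k (PathSpace k Q) :=
  Submodule.span k (pe k '' {p : Q.PathIdx | p.s = i ∧ p.t = j ∧ p.l.length = d})

/-- The span of the paths of length `d` (the degree `d` component of the path space). -/
noncomputable def spanLen (Q : Quiv) (d : ℕ) : Submodule k (PathSpace k Q) :=
  Submodule.span k (pe k '' {p : Q.PathIdx | p.l.length = d})

/-- A set of relations for a quiver: each element is a linear combination of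
paths of a common length `d ≥ 2` with a common source and a common target. -/
def IsRelSet (Q : Quiv) (ρ : Set (PathSpace k Q)) : Prop :=
  ∀ r ∈ ρ, ∃ (i j : Q.V) (d : ℕ), 2 ≤ d ∧ r ∈ spanPaths k Q i j d

/-- A set of quadratic relations. -/
def IsQuadRelSet (Q : Quiv) (ρ : Set (PathSpace k Q)) : Prop :=
  ∀ r ∈ ρ, ∃ (i j : Q.V), r ∈ spanPaths k Q i j 2

/-- The two-sided ideal of the path space generated by a set of relations
(as a `k`-subspace: the span of all `u⬝r⬝v` with `u`, `v` paths and `r` a relation). -/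
noncomputable def relIdeal (Q : Quiv) (ρ : Set (PathSpace k Q)) :
    Submodule k (PathSpace k Q) :=
  Submodule.span k
    {z | ∃ r ∈ ρ, ∃ u v : Q.PathIdx, z = psMul k Q (pe k u) (psMul k Q r (pe k v))}

/-- A path is a bound path if its image in the bound quiver algebra
`kQ/(ρ)` is non-zero. -/
def IsBoundPath (Q : Quiv) (ρ : Set (PathSpace k Q)) (p : Q.PathIdx) : Prop :=
  pe k p ∉ relIdeal k Q ρ

/-- A maximal bound path: a bound path which stays bound under no extension by an
arrow on either side. -/
def IsMaxBoundPath (Q : Quiv) (ρ : Set (PathSpace k Q)) (p : Q.PathIdx) : Prop :=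
  IsBoundPath k Q ρ p ∧
    (∀ a : Q.A, ∀ h : Q.src a = p.t,
      ¬ IsBoundPath k Q ρ ((Q.arrIdx a).comp p h.symm)) ∧
    (∀ a : Q.A, ∀ h : p.s = Q.tgt a,
      ¬ IsBoundPath k Q ρ (p.comp (Q.arrIdx a) h.symm))

/-- A bound quiver is `n`-homogeneous if its relations are homogeneous and all
maximal bound paths have the same length `n`. -/
def IsNHomog (Q : Quiv) (ρ : Set (PathSpace k Q)) (n : ℕ) : Prop :=
  IsRelSet k Q ρ ∧ ∀ p : Q.PathIdx, IsMaxBoundPath k Q ρ p → p.l.length = n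

/-- Transport of paths along a morphism of quivers. -/
theorem Quiv.IsPath.map {Q Q' : Quiv} (fV : Q.V → Q'.V) (fA : Q.A → Q'.A)
    (hs : ∀ a, Q'.src (fA a) = fV (Q.src a)) (ht : ∀ a, Q'.tgt (fA a) = fV (Q.tgt a))
    {i j : Q.V} {l : List Q.A} (h : Q.IsPath i j l) :
    Q'.IsPath (fV i) (fV j) (l.map fA) := by
  induction h with
  | nil => exact .nil _
  | cons a h ha ih =>
      have := Quiv.IsPath.cons (Q := Q') (fA a) ih (by rw [hs, ha])
      simpa [ht a] using this

/-- Transport of a path (with its endpoints) along a morphism of quivers. -/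
def pathIdxMap {Q Q' : Quiv} (fV : Q.V → Q'.V) (fA : Q.A → Q'.A)
    (hs : ∀ a, Q'.src (fA a) = fV (Q.src a)) (ht : ∀ a, Q'.tgt (fA a) = fV (Q.tgt a))
    (p : Q.PathIdx) : Q'.PathIdx :=
  ⟨fV p.s, fV p.t, p.l.map fA, p.isPath.map fV fA hs ht⟩

/-- The linear map between path spaces induced by a morphism of quivers. -/
noncomputable def pathSpaceMap {Q Q' : Quiv} (fV : Q.V → Q'.V) (fA : Q.A → Q'.A)
    (hs : ∀ a, Q'.src (fA a) = fV (Q.src a)) (ht : ∀ a, Q'.tgt (fA a) = fV (Q.tgt a)) :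
    PathSpace k Q →ₗ[k] PathSpace k Q' :=
  Finsupp.lmapDomain k k (pathIdxMap fV fA hs ht)

/-- The linear endomorphism of the path space picking the component
`e_i ⬝ x ⬝ e_j` (spanned by the paths from `j` to `i`). -/
noncomputable def sandwich (Q : Quiv) (i j : Q.V) :
    PathSpace k Q →ₗ[k] PathSpace k Q :=
  Finsupp.lsum k fun p => LinearMap.toSpanSingleton k _
    (if p.s = j ∧ p.t = i then pe k p else 0)

end TEPP
/- ## Core part B : path algebras of finite quivers, bound quiver algebras,
      twisted trivial extensions, returning arrow quivers -/

namespace TEPP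

variable (k : Type) [Field k]

/-- Path decomposition: removing the last arrow of a non-trivial path. -/
theorem Quiv.IsPath.cons_elim {Q : Quiv} {i j : Q.V} {a : Q.A} {l : List Q.A}
    (h : Q.IsPath i j (a :: l)) : j = Q.tgt a ∧ Q.IsPath i (Q.src a) l := by
  generalize hl : a :: l = l' at h
  cases h with
  | nil => simp at hl
  | cons b h hb =>
      obtain ⟨rfl, rfl⟩ : a = b ∧ l = _ := by
        constructor <;> injection hl
      exact ⟨rfl, by rwa [hb]⟩

theorem Quiv.IsPath.nil_elim {Q : Quiv} {i j : Q.V} (h : Q.IsPath i j []) : i = j := by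
  cases h; rfl

/-- Path decomposition: removing the first arrow of a non-trivial path. -/
theorem Quiv.IsPath.concat_elim {Q : Quiv} {i j : Q.V} {a : Q.A} {l : List Q.A}
    (h : Q.IsPath i j (l ++ [a])) : i = Q.src a ∧ Q.IsPath (Q.tgt a) j l := by
  induction l generalizing j with
  | nil =>
      simp only [List.nil_append] at h
      obtain ⟨hj, h0⟩ := h.cons_elim
      exact ⟨h0.nil_elim, by subst hj; exact .nil _⟩
  | cons b l ih =>
      obtain ⟨hj, h0⟩ := h.cons_elim
      obtain ⟨hi, h1⟩ := ih h0
      exact ⟨hi, hj ▸ .cons b h1 rfl⟩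

/-- The last arrow `α_l(p)` of a non-trivial path `p = α_l(p)·χ_l(p)`. -/
def alphaL {Q : Quiv} (p : Q.PathIdx) (h : p.l ≠ []) : Q.A := p.l.head h

/-- The first arrow `α_r(p)` of a non-trivial path `p = χ_r(p)·α_r(p)`. -/
def alphaR {Q : Quiv} (p : Q.PathIdx) (h : p.l ≠ []) : Q.A := p.l.getLast h

theorem pathIdx_eq_head_cons_tail {Q : Quiv} (p : Q.PathIdx) (h : p.l ≠ []) :
    Q.IsPath p.s p.t (p.l.head h :: p.l.tail) := by
  rw [List.cons_head_tail]; exact p.isPath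

/-- The path `χ_l(p)` obtained from a non-trivial path `p` by removing its last
arrow, so that `p = α_l(p)·χ_l(p)`. -/
def chiL {Q : Quiv} (p : Q.PathIdx) (h : p.l ≠ []) : Q.PathIdx :=
  ⟨p.s, Q.src (alphaL p h), p.l.tail, ((pathIdx_eq_head_cons_tail p h).cons_elim).2⟩

theorem tgt_alphaL {Q : Quiv} (p : Q.PathIdx) (h : p.l ≠ []) :
    p.t = Q.tgt (alphaL p h) := ((pathIdx_eq_head_cons_tail p h).cons_elim).1

theorem pathIdx_eq_dropLast_concat {Q : Quiv} (p : Q.PathIdx) (h : p.l ≠ []) :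
    Q.IsPath p.s p.t (p.l.dropLast ++ [p.l.getLast h]) := by
  rw [List.dropLast_concat_getLast]; exact p.isPath

/-- The path `χ_r(p)` obtained from a non-trivial path `p` by removing its first
arrow, so that `p = χ_r(p)·α_r(p)`. -/
def chiR {Q : Quiv} (p : Q.PathIdx) (h : p.l ≠ []) : Q.PathIdx :=
  ⟨Q.tgt (alphaR p h), p.t, p.l.dropLast, ((pathIdx_eq_dropLast_concat p h).concat_elim).2⟩

theorem src_alphaR {Q : Quiv} (p : Q.PathIdx) (h : p.l ≠ []) :
    p.s = Q.src (alphaR p h) := ((pathIdx_eq_dropLast_concat p h).concat_elim).1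

/-- The defining relations of the path algebra of a finite quiver, presented as a
quotient of the free algebra on the vertices and the arrows: the (images of the)
vertices are orthogonal idempotents summing to `1`, and the arrows are composable
with the vertex idempotents according to their sources and targets. -/
inductive PathAlgRel (Q : Quiv) [Fintype Q.V] :
    FreeAlgebra k (Q.V ⊕ Q.A) → FreeAlgebra k (Q.V ⊕ Q.A) → Prop
  | vertex_mul (i j : Q.V) :
      PathAlgRel Q (FreeAlgebra.ι k (Sum.inl i) * FreeAlgebra.ι k (Sum.inl j))
        (if i = j then FreeAlgebra.ι k (Sum.inl i) else 0)
  | one_eq : PathAlgRel Q (∑ i : Q.V, FreeAlgebra.ι k (Sum.inl i)) 1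
  | tgt_mul (j : Q.V) (a : Q.A) :
      PathAlgRel Q (FreeAlgebra.ι k (Sum.inl j) * FreeAlgebra.ι k (Sum.inr a))
        (if j = Q.tgt a then FreeAlgebra.ι k (Sum.inr a) else 0)
  | mul_src (a : Q.A) (i : Q.V) :
      PathAlgRel Q (FreeAlgebra.ι k (Sum.inr a) * FreeAlgebra.ι k (Sum.inl i))
        (if i = Q.src a then FreeAlgebra.ι k (Sum.inr a) else 0)

/-- The path algebra `kQ` of a finite quiver `Q`. -/
def PathAlg (Q : Quiv) [Fintype Q.V] : Type := RingQuot (PathAlgRel k Q)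

noncomputable instance (Q : Quiv) [Fintype Q.V] : Ring (PathAlg k Q) :=
  inferInstanceAs (Ring (RingQuot (PathAlgRel k Q)))
noncomputable instance (Q : Quiv) [Fintype Q.V] : Algebra k (PathAlg k Q) :=
  inferInstanceAs (Algebra k (RingQuot (PathAlgRel k Q)))

variable {Q : Quiv} [Fintype Q.V]

/-- The idempotent `e_i` of the path algebra attached to a vertex. -/
noncomputable def vtx (i : Q.V) : PathAlg k Q :=
  RingQuot.mkAlgHom k (PathAlgRel k Q) (FreeAlgebra.ι k (Sum.inl i))

/-- The element of the path algebra attached to an arrow. -/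
noncomputable def arr (a : Q.A) : PathAlg k Q :=
  RingQuot.mkAlgHom k (PathAlgRel k Q) (FreeAlgebra.ι k (Sum.inr a))

/-- The element of the path algebra attached to a path. -/
noncomputable def pathEl (p : Q.PathIdx) : PathAlg k Q :=
  (p.l.map (arr k)).prod * vtx k p.s

/-- The canonical linear map from the path space onto the path algebra. -/
noncomputable def toPA : PathSpace k Q →ₗ[k] PathAlg k Q :=
  Finsupp.linearCombination k (pathEl k)

/-- The relation on an algebra used to present a quotient by the two-sided ideal
generated by a set `S`. -/
def quotRel {R : Type} [Zero R] (S : Set R) : R → R → Prop := fun x y => x ∈ S ∧ y = 0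

/-- `Presents μ S` : the surjective algebra morphism `μ` identifies its target with
the quotient of its source by the two-sided ideal generated by `S`; i.e. `S` is a set
of relations presenting the target of `μ`. -/
def Presents {R T : Type} [Ring R] [Algebra k R] [Ring T] [Algebra k T]
    (μ : R →ₐ[k] T) (S : Set R) : Prop :=
  ∃ h : ∀ ⦃x y⦄, quotRel S x y → μ x = μ y,
    Function.Bijective (RingQuot.liftAlgHom k ⟨μ, h⟩)

/-- The bound quiver algebra `kQ/(ρ)` of a finite bound quiver. -/
def BoundAlg (Q : Quiv) [Fintype Q.V] (ρ : Set (PathSpace k Q)) : Type :=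
  RingQuot (quotRel (toPA k '' ρ))

noncomputable instance (Q : Quiv) [Fintype Q.V] (ρ : Set (PathSpace k Q)) :
    Ring (BoundAlg k Q ρ) :=
  inferInstanceAs (Ring (RingQuot (quotRel (toPA k '' ρ))))
noncomputable instance (Q : Quiv) [Fintype Q.V] (ρ : Set (PathSpace k Q)) :
    Algebra k (BoundAlg k Q ρ) :=
  inferInstanceAs (Algebra k (RingQuot (quotRel (toPA k '' ρ))))

/-- The canonical projection from the path algebra onto the bound quiver algebra. -/
noncomputable def mkB (Q : Quiv) [Fintype Q.V] (ρ : Set (PathSpace k Q)) :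
    PathAlg k Q →ₐ[k] BoundAlg k Q ρ :=
  RingQuot.mkAlgHom k (quotRel (toPA k '' ρ))

/-- The canonical linear map from the path space onto the bound quiver algebra. -/
noncomputable def mkL (Q : Quiv) [Fintype Q.V] (ρ : Set (PathSpace k Q)) :
    PathSpace k Q →ₗ[k] BoundAlg k Q ρ :=
  (mkB k Q ρ).toLinearMap ∘ₗ toPA k

/-- The degree `t` component of the (path-length) grading of the bound quiver
algebra. -/
noncomputable def piece (Q : Quiv) [Fintype Q.V] (ρ : Set (PathSpace k Q)) (t : ℕ) :
    Submodule k (BoundAlg k Q ρ) :=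
  (spanLen k Q t).map (mkL k Q ρ)

/-- An algebra automorphism of a bound quiver algebra is graded if it preserves all
homogeneous components. -/
def IsGradedAut (Q : Quiv) [Fintype Q.V] (ρ : Set (PathSpace k Q))
    (σ : BoundAlg k Q ρ ≃ₐ[k] BoundAlg k Q ρ) : Prop :=
  ∀ (t : ℕ), ∀ x ∈ piece k Q ρ t, σ x ∈ piece k Q ρ t

/-- The degree `t` component of the dual of a graded algebra: the functionals
vanishing on all homogeneous components of degree `≠ t`. -/
noncomputable def dualPiece {A : Type} [Ring A] [Algebra k A]
    (pieces : ℕ → Submodule k A) (t : ℕ) : Submodule k (A →ₗ[k] k) :=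
  ⨅ (s : ℕ) (_ : s ≠ t) (x : (pieces s : Set A)), LinearMap.ker (LinearMap.applyₗ (x : A))

end TEPP
/- ## Core part C : twisted duals and twisted trivial extensions -/

namespace TEPP

variable (k : Type) [Field k]

/-- The dual `DA = Hom_k(A,k)` of an algebra `A`, as an `A`-bimodule whose right
action is twisted by the algebra endomorphism `σ` : `(a·f·b)(c) = f(σ(b)·c·a)`. -/
def DualTw (A : Type) [Ring A] [Algebra k A] (σ : A →ₐ[k] A) : Type := A →ₗ[k] k

variable {A : Type} [Ring A] [Algebra k A] (σ : A →ₐ[k] A)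

instance : AddCommGroup (DualTw k A σ) := inferInstanceAs (AddCommGroup (A →ₗ[k] k))
instance : Module k (DualTw k A σ) := inferInstanceAs (Module k (A →ₗ[k] k))

/-- View a functional on `A` as an element of the twisted dual bimodule. -/
def DualTw.of (f : A →ₗ[k] k) : DualTw k A σ := f

/-- The underlying functional of an element of the twisted dual bimodule. -/
def DualTw.fn (f : DualTw k A σ) : A →ₗ[k] k := f

theorem DualTw.ext {σ : A →ₐ[k] A} {f g : DualTw k A σ}
    (h : ∀ x, DualTw.fn k σ f x = DualTw.fn k σ g x) : f = g := LinearMap.ext h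

/-- Left `A`-action on the twisted dual: `(a • f) (c) = f (c * a)`. -/
noncomputable def DualTw.lact (a : A) (f : DualTw k A σ) : DualTw k A σ :=
  DualTw.of k σ ((DualTw.fn k σ f).comp (LinearMap.mulRight k a))

/-- Right `A`-action on the twisted dual, twisted by `σ` :
`(f • b) (c) = f (σ(b) * c)`. -/
noncomputable def DualTw.ract (b : Aᵐᵒᵖ) (f : DualTw k A σ) : DualTw k A σ :=
  DualTw.of k σ ((DualTw.fn k σ f).comp (LinearMap.mulLeft k (σ b.unop)))

theorem DualTw.lact_apply (a : A) (f : DualTw k A σ) (x : A) :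
    DualTw.fn k σ (DualTw.lact k σ a f) x = DualTw.fn k σ f (x * a) := rfl

theorem DualTw.ract_apply (b : Aᵐᵒᵖ) (f : DualTw k A σ) (x : A) :
    DualTw.fn k σ (DualTw.ract k σ b f) x = DualTw.fn k σ f (σ b.unop * x) := rfl

theorem DualTw.fn_add (f g : DualTw k A σ) (x : A) :
    DualTw.fn k σ (f + g) x = DualTw.fn k σ f x + DualTw.fn k σ g x := rfl

theorem DualTw.fn_zero (x : A) : DualTw.fn k σ (0 : DualTw k A σ) x = 0 := rfl

theorem DualTw.fn_smul (c : k) (f : DualTw k A σ) (x : A) :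
    DualTw.fn k σ (c • f) x = c • DualTw.fn k σ f x := rfl

noncomputable instance : Module A (DualTw k A σ) where
  smul := DualTw.lact k σ
  one_smul f := DualTw.ext k (fun x => by
    show DualTw.fn k σ (DualTw.lact k σ 1 f) x = DualTw.fn k σ f x
    rw [DualTw.lact_apply, mul_one])
  mul_smul a b f := DualTw.ext k (fun x => by
    show DualTw.fn k σ (DualTw.lact k σ (a * b) f) x =
      DualTw.fn k σ (DualTw.lact k σ a (DualTw.lact k σ b f)) x
    rw [DualTw.lact_apply, DualTw.lact_apply, DualTw.lact_apply, mul_assoc])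
  smul_zero a := DualTw.ext k (fun x => by
    show DualTw.fn k σ (DualTw.lact k σ a 0) x = DualTw.fn k σ (0 : DualTw k A σ) x
    rw [DualTw.lact_apply, DualTw.fn_zero, DualTw.fn_zero])
  smul_add a f g := DualTw.ext k (fun x => by
    show DualTw.fn k σ (DualTw.lact k σ a (f + g)) x =
      DualTw.fn k σ (DualTw.lact k σ a f + DualTw.lact k σ a g) x
    rw [DualTw.lact_apply, DualTw.fn_add, DualTw.fn_add, DualTw.lact_apply,
      DualTw.lact_apply])
  add_smul a b f := DualTw.ext k (fun x => by
    show DualTw.fn k σ (DualTw.lact k σ (a + b) f) x =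
      DualTw.fn k σ (DualTw.lact k σ a f + DualTw.lact k σ b f) x
    rw [DualTw.lact_apply, DualTw.fn_add, DualTw.lact_apply, DualTw.lact_apply,
      mul_add, map_add])
  zero_smul f := DualTw.ext k (fun x => by
    show DualTw.fn k σ (DualTw.lact k σ 0 f) x = DualTw.fn k σ (0 : DualTw k A σ) x
    rw [DualTw.lact_apply, DualTw.fn_zero, mul_zero, map_zero])

noncomputable instance : Module Aᵐᵒᵖ (DualTw k A σ) where
  smul := DualTw.ract k σ
  one_smul f := DualTw.ext k (fun x => by
    show DualTw.fn k σ (DualTw.ract k σ 1 f) x = DualTw.fn k σ f x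
    rw [DualTw.ract_apply]; simp)
  mul_smul a b f := DualTw.ext k (fun x => by
    show DualTw.fn k σ (DualTw.ract k σ (a * b) f) x =
      DualTw.fn k σ (DualTw.ract k σ a (DualTw.ract k σ b f)) x
    rw [DualTw.ract_apply, DualTw.ract_apply, DualTw.ract_apply]
    simp [map_mul, mul_assoc])
  smul_zero a := DualTw.ext k (fun x => by
    show DualTw.fn k σ (DualTw.ract k σ a 0) x = DualTw.fn k σ (0 : DualTw k A σ) x
    rw [DualTw.ract_apply, DualTw.fn_zero, DualTw.fn_zero])
  smul_add a f g := DualTw.ext k (fun x => by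
    show DualTw.fn k σ (DualTw.ract k σ a (f + g)) x =
      DualTw.fn k σ (DualTw.ract k σ a f + DualTw.ract k σ a g) x
    rw [DualTw.ract_apply, DualTw.fn_add, DualTw.fn_add, DualTw.ract_apply,
      DualTw.ract_apply])
  add_smul a b f := DualTw.ext k (fun x => by
    show DualTw.fn k σ (DualTw.ract k σ (a + b) f) x =
      DualTw.fn k σ (DualTw.ract k σ a f + DualTw.ract k σ b f) x
    rw [DualTw.ract_apply, DualTw.fn_add, DualTw.ract_apply, DualTw.ract_apply]
    simp [map_add, add_mul])
  zero_smul f := DualTw.ext k (fun x => by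
    show DualTw.fn k σ (DualTw.ract k σ 0 f) x = DualTw.fn k σ (0 : DualTw k A σ) x
    rw [DualTw.ract_apply, DualTw.fn_zero]
    simp)

instance : SMulCommClass A Aᵐᵒᵖ (DualTw k A σ) where
  smul_comm a b f := DualTw.ext k (fun x => by
    show DualTw.fn k σ (DualTw.lact k σ a (DualTw.ract k σ b f)) x =
      DualTw.fn k σ (DualTw.ract k σ b (DualTw.lact k σ a f)) x
    rw [DualTw.lact_apply, DualTw.ract_apply, DualTw.ract_apply, DualTw.lact_apply,
      mul_assoc])

instance : IsScalarTower k A (DualTw k A σ) where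
  smul_assoc c a f := DualTw.ext k (fun x => by
    show DualTw.fn k σ (DualTw.lact k σ (c • a) f) x =
      DualTw.fn k σ (c • DualTw.lact k σ a f) x
    rw [DualTw.lact_apply, DualTw.fn_smul, DualTw.lact_apply, Algebra.mul_smul_comm,
      map_smul])

instance : IsScalarTower k Aᵐᵒᵖ (DualTw k A σ) where
  smul_assoc c b f := DualTw.ext k (fun x => by
    show DualTw.fn k σ (DualTw.ract k σ (c • b) f) x =
      DualTw.fn k σ (c • DualTw.ract k σ b f) x
    rw [DualTw.ract_apply, DualTw.fn_smul, DualTw.ract_apply]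
    have : σ ((c • b).unop) = c • σ b.unop := by
      simp [MulOpposite.unop_smul, map_smul]
    rw [this, Algebra.smul_mul_assoc, map_smul])

/-- The twisted trivial extension `Δ_σ A = A ⋉ DA^σ` of an algebra `A` by the
`σ`-twisted dual bimodule: the multiplication is
`(a, x) * (b, y) = (a * b, a • y + x • b)`. -/
def TwTrivExt (A : Type) [Ring A] [Algebra k A] (σ : A →ₐ[k] A) : Type :=
  TrivSqZeroExt A (DualTw k A σ)

noncomputable instance : Ring (TwTrivExt k A σ) :=
  inferInstanceAs (Ring (TrivSqZeroExt A (DualTw k A σ)))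
noncomputable instance : Algebra k (TwTrivExt k A σ) :=
  inferInstanceAs (Algebra k (TrivSqZeroExt A (DualTw k A σ)))

/-- The inclusion of `A` in the twisted trivial extension. -/
noncomputable def TwTrivExt.inl (a : A) : TwTrivExt k A σ :=
  TrivSqZeroExt.inl a

/-- The inclusion of the twisted dual in the twisted trivial extension. -/
noncomputable def TwTrivExt.inr (f : DualTw k A σ) : TwTrivExt k A σ :=
  TrivSqZeroExt.inr f

end TEPP
/- ## Core part D : bases of maximal bound paths, dual bases, the returning
      arrow quiver, and the maps `μ_σ` and `ζ` -/

namespace TEPP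

variable (k : Type) [Field k]

/-- A basis of the degree `t` homogeneous component `Λ_t` of a bound quiver algebra
consisting of (classes of) bound paths of length `t`. -/
structure PieceBasis (Q : Quiv) [Fintype Q.V] (ρ : Set (PathSpace k Q)) (t : ℕ) where
  ι : Type
  [fin : Fintype ι]
  pth : ι → Q.PathIdx
  len : ∀ m, (pth m).l.length = t
  bound : ∀ m, IsBoundPath k Q ρ (pth m)
  indep : LinearIndependent k fun m => mkL k Q ρ (pe k (pth m))
  spans : Submodule.span k (Set.range fun m => mkL k Q ρ (pe k (pth m)))
            = piece k Q ρ t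

attribute [instance] PieceBasis.fin

/-- A maximal linearly independent set `M` of maximal bound paths of an
`n`-homogeneous bound quiver (a basis of `Λ_n` of maximal bound paths). -/
structure MaxBasis (Q : Quiv) [Fintype Q.V] (ρ : Set (PathSpace k Q)) (n : ℕ)
    extends PieceBasis k Q ρ n where
  maxb : ∀ m, IsMaxBoundPath k Q ρ (pth m)

theorem PieceBasis.ne_nil {Q : Quiv} [Fintype Q.V] {ρ : Set (PathSpace k Q)} {t : ℕ}
    (M : PieceBasis k Q ρ t) (ht : 1 ≤ t) (m : M.ι) : (M.pth m).l ≠ [] := by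
  intro h0
  have := M.len m
  rw [h0] at this
  simp at this
  omega

/-- The dual basis `{p* | p ∈ M}` in `DΛ_t` of a basis `M` of `Λ_t` consisting of
bound paths: each `p*` is a functional on `Λ` vanishing on the components of degree
`≠ t` and dual to the basis `M` on `Λ_t`. -/
structure DualData {Q : Quiv} [Fintype Q.V] {ρ : Set (PathSpace k Q)} {t : ℕ}
    (B : PieceBasis k Q ρ t) where
  pstar : B.ι → (BoundAlg k Q ρ →ₗ[k] k)
  dual : ∀ m m', pstar m (mkL k Q ρ (pe k (B.pth m'))) = if m = m' then 1 else 0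
  vanish : ∀ m s, s ≠ t → ∀ x ∈ piece k Q ρ s, pstar m x = 0

/-- The returning arrow quiver `tQ`: one new arrow `β_p : t(p) → s(p)` is added
for each (chosen basis) maximal bound path `p`. -/
def retQuiv (Q : Quiv) {ι : Type} (pth : ι → Q.PathIdx) : Quiv where
  V := Q.V
  A := Q.A ⊕ ι
  src := Sum.elim Q.src fun m => (pth m).t
  tgt := Sum.elim Q.tgt fun m => (pth m).s

noncomputable instance retQuivFintypeV (Q : Quiv) {ι : Type} (pth : ι → Q.PathIdx)
    [Fintype Q.V] : Fintype (retQuiv Q pth).V := inferInstanceAs (Fintype Q.V)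

noncomputable instance retQuivFintypeA (Q : Quiv) {ι : Type} (pth : ι → Q.PathIdx)
    [Fintype Q.A] [Fintype ι] : Fintype (retQuiv Q pth).A :=
  inferInstanceAs (Fintype (Q.A ⊕ ι))

/-- The length-one path of `tQ` given by the returning arrow `β_p`, `p = pth m`. -/
def betaIdx {Q : Quiv} {ι : Type} (pth : ι → Q.PathIdx) (m : ι) :
    (retQuiv Q pth).PathIdx :=
  (retQuiv Q pth).arrIdx (Sum.inr m)

/-- The length-one path of `tQ` given by an arrow of `Q`. -/
def alIdx {Q : Quiv} {ι : Type} (pth : ι → Q.PathIdx) (a : Q.A) :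
    (retQuiv Q pth).PathIdx :=
  (retQuiv Q pth).arrIdx (Sum.inl a)

/-- The inclusion of the path space of `Q` into the path space of the returning
arrow quiver `tQ`. -/
noncomputable def incl {Q : Quiv} (ι : Type) (pth : ι → Q.PathIdx) :
    PathSpace k Q →ₗ[k] PathSpace k (retQuiv Q pth) :=
  pathSpaceMap k (Q := Q) (Q' := retQuiv Q pth) id Sum.inl (fun _ => rfl) (fun _ => rfl)

/-- The set of relations `ρ_M = {β_p ⊗ β_{p'} | t(p) = s(p')}`. -/
noncomputable def rhoM {Q : Quiv} (ι : Type) (pth : ι → Q.PathIdx) :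
    Set (PathSpace k (retQuiv Q pth)) :=
  {z | ∃ (m m' : ι) (h : (betaIdx pth m').t = (betaIdx pth m).s),
    z = pe k ((betaIdx pth m).comp (betaIdx pth m') h)}

/-- The subspace `N = V ⊗ V_M ⊕ V_M ⊗ V` of the degree two component of the path
space of `tQ`, spanned by the mixed paths of length two. -/
noncomputable def NN {Q : Quiv} (ι : Type) (pth : ι → Q.PathIdx) :
    Submodule k (PathSpace k (retQuiv Q pth)) :=
  Submodule.span k
    ({z | ∃ (a : Q.A) (m : ι) (h : (betaIdx pth m).t = (alIdx pth a).s),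
        z = pe k ((alIdx pth a).comp (betaIdx pth m) h)} ∪
     {z | ∃ (m : ι) (a : Q.A) (h : (alIdx pth a).t = (betaIdx pth m).s),
        z = pe k ((betaIdx pth m).comp (alIdx pth a) h)})

/-- Characterisation of the algebra morphism `μ_σ : ktQ → Δ_σΛ` extending the
canonical projection `kQ → Λ` and sending the returning arrow `β_p` to `(0, p*)`. -/
def IsMuSigma {Q : Quiv} [Fintype Q.V] (ρ : Set (PathSpace k Q)) {ι : Type}
    (pth : ι → Q.PathIdx) (pstar : ι → (BoundAlg k Q ρ →ₗ[k] k))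
    (σ : BoundAlg k Q ρ →ₐ[k] BoundAlg k Q ρ)
    (μ : PathAlg k (retQuiv Q pth) →ₐ[k] TwTrivExt k (BoundAlg k Q ρ) σ) : Prop :=
  (∀ i : Q.V, μ (vtx k i) = TwTrivExt.inl k σ (mkL k Q ρ (pe k (Q.trivIdx i)))) ∧
  (∀ a : Q.A, μ (arr k (Sum.inl a)) = TwTrivExt.inl k σ (mkL k Q ρ (pe k (Q.arrIdx a)))) ∧
  (∀ m : ι, μ (arr k (Sum.inr m)) = TwTrivExt.inr k σ (DualTw.of k σ (pstar m)))

/-- The graded automorphism `ν` of a bound quiver algebra determined by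
`α ↦ (−1)ⁿ α` on the arrows. -/
def IsNuAut {Q : Quiv} [Fintype Q.V] (ρ : Set (PathSpace k Q)) (n : ℕ)
    (ν : BoundAlg k Q ρ ≃ₐ[k] BoundAlg k Q ρ) : Prop :=
  IsGradedAut k Q ρ ν ∧
    ∀ a : Q.A, ν (mkL k Q ρ (pe k (Q.arrIdx a)))
      = ((-1 : k) ^ n) • mkL k Q ρ (pe k (Q.arrIdx a))

/-- The element `ζ_q = f*(q*)` of `N ⊆ ktQ₂` (identified with
`Γ₁ ⊗ DΛ_n + DΛ_n ⊗ Γ₁` via `β_p ↔ p*`), for `q` in the chosen basis of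
`Λ_{n-1}`; it is given by
`ζ_q = ∑_{p} q*(χ_l(p)) p*⊗α_l(p) + (−1)ⁿ ∑_{p} q*(χ_r(p)) α_r(p)⊗p*`. -/
noncomputable def zeta {Q : Quiv} [Fintype Q.V] {ρ : Set (PathSpace k Q)} {n : ℕ}
    (hn : 1 ≤ n) (M : PieceBasis k Q ρ n) {B1 : PieceBasis k Q ρ (n - 1)}
    (D1 : DualData k B1) (q : B1.ι) : PathSpace k (retQuiv Q M.pth) :=
  (∑ m : M.ι,
      (D1.pstar q (mkL k Q ρ (pe k (chiL (M.pth m) (M.ne_nil k hn m))))) •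
        pe k ((betaIdx M.pth m).comp (alIdx M.pth (alphaL (M.pth m) (M.ne_nil k hn m)))
          (tgt_alphaL (M.pth m) (M.ne_nil k hn m)).symm))
  + ((-1 : k) ^ n) •
    (∑ m : M.ι,
      (D1.pstar q (mkL k Q ρ (pe k (chiR (M.pth m) (M.ne_nil k hn m))))) •
        pe k ((alIdx M.pth (alphaR (M.pth m) (M.ne_nil k hn m))).comp (betaIdx M.pth m)
          (src_alphaR (M.pth m) (M.ne_nil k hn m))))

/-- The coefficient `a^{α,q}_p = p*(αq)`. -/
noncomputable def aCoeffL {Q : Quiv} [Fintype Q.V] {ρ : Set (PathSpace k Q)} {n : ℕ}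
    {M : PieceBasis k Q ρ n} (Dn : DualData k M) (a : Q.A) (qp : Q.PathIdx)
    (m : M.ι) : k :=
  Dn.pstar m (mkL k Q ρ (psMul k Q (pe k (Q.arrIdx a)) (pe k qp)))

/-- The coefficient `a^{q,α}_p = p*(qα)`. -/
noncomputable def aCoeffR {Q : Quiv} [Fintype Q.V] {ρ : Set (PathSpace k Q)} {n : ℕ}
    {M : PieceBasis k Q ρ n} (Dn : DualData k M) (qp : Q.PathIdx) (a : Q.A)
    (m : M.ι) : k :=
  Dn.pstar m (mkL k Q ρ (psMul k Q (pe k qp) (pe k (Q.arrIdx a))))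

/-- The orthogonal complement of the span of the quadratic relations `ρ` in the
degree two component `kQ₂` of the path space, with respect to the pairing
identifying `kQ₂` with its own dual via the path basis. -/
noncomputable def orthQuad (Q : Quiv) (ρ : Set (PathSpace k Q)) :
    Submodule k (PathSpace k Q) :=
  spanLen k Q 2 ⊓ ⨅ r ∈ ρ, LinearMap.ker (pair k Q r)

/-- `ρp` is a quadratic dual relation set for `ρ` : a relation set which is a basis
of the orthogonal complement of `span ρ` in `kQ₂`. -/
def IsQuadDual (Q : Quiv) (ρ ρp : Set (PathSpace k Q)) : Prop :=
  IsRelSet k Q ρp ∧ ρp ⊆ (orthQuad k Q ρ : Set (PathSpace k Q)) ∧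
    LinearIndependent k (fun x : ρp => (x : PathSpace k Q)) ∧
    Submodule.span k ρp = orthQuad k Q ρ

end TEPP

/-!
`μ` kills `tρ`: the relations `ρ` already die in `Λ`, `μ(β_p β_{p'}) = (0,p*)(0,p'*) = 0`, and
`ρ₀ ⊆ ker μ`. Conversely, `ΔΛ` has some quadratic presentation `τ`, so it is enough to see that
each `t ∈ τ` lies in the ideal `(tρ)`. Split `ktQ₂ = kQ₂ ⊕ N ⊕ V_M ⊗ V_M`: `μ` sends the first
summand into `Λ`, the second into `DΛ`, and kills the third, which is spanned by `ρ_M`. Hence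
`μ(t) = 0` forces the `kQ₂`-component of `t` to vanish in `Λ = kQ/(ρ)` and the `N`-component to
lie in `ker μ ∩ N = span ρ₀`.
-/

namespace TEPP

section Presents

variable {k : Type} [Field k] {R T : Type} [Ring R] [Algebra k R] [Ring T] [Algebra k T]

theorem mkAlgHom_quotRel_eq_zero {S : Set R} {r : R} (hr : r ∈ S) :
    RingQuot.mkAlgHom k (quotRel S) r = 0 :=
  (RingQuot.mkAlgHom_rel k (show quotRel S r 0 from ⟨hr, rfl⟩)).trans (map_zero _)

theorem Presents.map_eq_zero {μ : R →ₐ[k] T} {S : Set R} (h : Presents k μ S) {s : R}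
    (hs : s ∈ S) : μ s = 0 :=
  (h.1 ⟨hs, rfl⟩).trans (map_zero μ)

theorem Presents.of_map_eq_zero_of_mk_eq_zero {μ : R →ₐ[k] T} {S S' : Set R}
    (hS : Presents k μ S) (hker : ∀ s ∈ S', μ s = 0)
    (hgen : ∀ s ∈ S, RingQuot.mkAlgHom k (quotRel S') s = 0) :
    Presents k μ S' := by
  obtain ⟨hμ, hinj, hsurj⟩ := hS
  have hμ' : ∀ ⦃x y⦄, quotRel S' x y → μ x = μ y := by
    rintro x y ⟨hx, rfl⟩
    rw [hker x hx, map_zero]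
  have hmk : ∀ ⦃x y⦄, quotRel S x y →
      RingQuot.mkAlgHom k (quotRel S') x = RingQuot.mkAlgHom k (quotRel S') y := by
    rintro x y ⟨hx, rfl⟩
    rw [hgen x hx, map_zero]
  refine ⟨hμ', ?_, ?_⟩
  · rw [injective_iff_map_eq_zero]
    intro w hw
    obtain ⟨z, rfl⟩ := RingQuot.mkAlgHom_surjective k _ w
    rw [RingQuot.liftAlgHom_mkAlgHom_apply] at hw
    have hz : RingQuot.mkAlgHom k (quotRel S) z = 0 :=
      hinj (by rw [RingQuot.liftAlgHom_mkAlgHom_apply, hw, map_zero])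
    rw [← RingQuot.liftAlgHom_mkAlgHom_apply k _ hmk z, hz, map_zero]
  · intro y
    obtain ⟨w, rfl⟩ := hsurj y
    obtain ⟨z, rfl⟩ := RingQuot.mkAlgHom_surjective k _ w
    exact ⟨RingQuot.mkAlgHom k _ z, by simp only [RingQuot.liftAlgHom_mkAlgHom_apply]⟩

end Presents

section PathAlg

variable (k : Type) [Field k] {Q : Quiv} [Fintype Q.V]

theorem toPA_single (p : Q.PathIdx) (b : k) :
    toPA k (Finsupp.single p b) = b • pathEl k p :=
  Finsupp.linearCombination_single k b p

theorem toPA_pe (p : Q.PathIdx) : toPA k (pe k p) = pathEl k p := by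
  rw [pe, toPA_single, one_smul]

theorem pathEl_trivIdx (i : Q.V) : pathEl k (Q.trivIdx i) = vtx k i := by
  simp [pathEl, Quiv.trivIdx]

theorem vtx_mul_vtx (i j : Q.V) : vtx k i * vtx k j = if i = j then vtx k i else 0 := by
  have h := RingQuot.mkAlgHom_rel k (PathAlgRel.vertex_mul (k := k) (Q := Q) i j)
  rwa [map_mul, apply_ite (RingQuot.mkAlgHom k _), map_zero] at h

theorem sum_vtx : ∑ i : Q.V, vtx k i = 1 := by
  have h := RingQuot.mkAlgHom_rel k (PathAlgRel.one_eq (k := k) (Q := Q))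
  rwa [map_sum, map_one] at h

theorem vtx_mul_arr (j : Q.V) (a : Q.A) :
    vtx k j * arr k a = if j = Q.tgt a then arr k a else 0 := by
  have h := RingQuot.mkAlgHom_rel k (PathAlgRel.tgt_mul (k := k) j a)
  rwa [map_mul, apply_ite (RingQuot.mkAlgHom k _), map_zero] at h

theorem arr_mul_vtx (a : Q.A) (i : Q.V) :
    arr k a * vtx k i = if i = Q.src a then arr k a else 0 := by
  have h := RingQuot.mkAlgHom_rel k (PathAlgRel.mul_src (k := k) a i)
  rwa [map_mul, apply_ite (RingQuot.mkAlgHom k _), map_zero] at h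

theorem pathEl_arrIdx (a : Q.A) : pathEl k (Q.arrIdx a) = arr k a := by
  simp [pathEl, Quiv.arrIdx, arr_mul_vtx]

theorem pathEl_comp_arrIdx (a b : Q.A) (h : (Q.arrIdx b).t = (Q.arrIdx a).s) :
    pathEl k ((Q.arrIdx a).comp (Q.arrIdx b) h) = arr k a * arr k b * vtx k (Q.src b) := by
  simp [pathEl, Quiv.PathIdx.comp, Quiv.arrIdx, mul_assoc]

theorem mkL_pe_trivIdx (ρ : Set (PathSpace k Q)) (i : Q.V) :
    mkL k Q ρ (pe k (Q.trivIdx i)) = mkB k Q ρ (vtx k i) := by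
  rw [mkL, LinearMap.comp_apply, toPA_pe, pathEl_trivIdx]
  rfl

theorem mkL_pe_arrIdx (ρ : Set (PathSpace k Q)) (a : Q.A) :
    mkL k Q ρ (pe k (Q.arrIdx a)) = mkB k Q ρ (arr k a) := by
  rw [mkL, LinearMap.comp_apply, toPA_pe, pathEl_arrIdx]
  rfl

theorem mkL_eq_zero_of_mem {ρ : Set (PathSpace k Q)} {x : PathSpace k Q} (hx : x ∈ ρ) :
    mkL k Q ρ x = 0 :=
  mkAlgHom_quotRel_eq_zero (Set.mem_image_of_mem _ hx)

end PathAlg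

section Inclusion

variable (k : Type) [Field k] {Q : Quiv} {ι : Type} (pth : ι → Q.PathIdx)

def pmap (p : Q.PathIdx) : (retQuiv Q pth).PathIdx :=
  pathIdxMap (Q := Q) (Q' := retQuiv Q pth) id Sum.inl (fun _ => rfl) (fun _ => rfl) p

theorem incl_single (p : Q.PathIdx) (b : k) :
    incl k ι pth (Finsupp.single p b) = Finsupp.single (pmap pth p) b :=
  Finsupp.mapDomain_single

variable [Fintype Q.V]

noncomputable def freeIncl : FreeAlgebra k (Q.V ⊕ Q.A) →ₐ[k] PathAlg k (retQuiv Q pth) :=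
  FreeAlgebra.lift k <|
    Sum.elim (vtx k (Q := retQuiv Q pth)) fun a => arr k (Q := retQuiv Q pth) (Sum.inl a)

theorem freeIncl_eq_of_pathAlgRel {x y : FreeAlgebra k (Q.V ⊕ Q.A)} (h : PathAlgRel k Q x y) :
    freeIncl k pth x = freeIncl k pth y := by
  cases h <;>
    simp only [freeIncl, map_mul, map_sum, map_one, map_zero, FreeAlgebra.lift_ι_apply,
      apply_ite (FreeAlgebra.lift k _), Sum.elim]
  case vertex_mul i j => exact vtx_mul_vtx k (Q := retQuiv Q pth) i j
  case one_eq => exact sum_vtx k (Q := retQuiv Q pth)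
  case tgt_mul j a => exact vtx_mul_arr k (Q := retQuiv Q pth) j (Sum.inl a)
  case mul_src a i => exact arr_mul_vtx k (Q := retQuiv Q pth) (Sum.inl a) i

noncomputable def inclAlgHom : PathAlg k Q →ₐ[k] PathAlg k (retQuiv Q pth) :=
  RingQuot.liftAlgHom k ⟨freeIncl k pth, fun _ _ h => freeIncl_eq_of_pathAlgRel k pth h⟩

theorem inclAlgHom_vtx (i : Q.V) :
    inclAlgHom k pth (vtx k i) = vtx k (Q := retQuiv Q pth) i :=
  (RingQuot.liftAlgHom_mkAlgHom_apply k _ _ _).trans (FreeAlgebra.lift_ι_apply _ _)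

theorem inclAlgHom_arr (a : Q.A) :
    inclAlgHom k pth (arr k a) = arr k (Q := retQuiv Q pth) (Sum.inl a) :=
  (RingQuot.liftAlgHom_mkAlgHom_apply k _ _ _).trans (FreeAlgebra.lift_ι_apply _ _)

theorem inclAlgHom_pathEl (p : Q.PathIdx) :
    inclAlgHom k pth (pathEl k p) = pathEl k (pmap pth p) := by
  simp only [pathEl, pmap, pathIdxMap, map_mul, map_list_prod, inclAlgHom_vtx, List.map_map]
  erw [List.map_map]
  congr 2
  exact List.map_congr_left fun a _ => inclAlgHom_arr k pth a

theorem inclAlgHom_comp_toPA :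
    (inclAlgHom k pth).toLinearMap ∘ₗ toPA k = toPA k ∘ₗ incl k ι pth :=
  Finsupp.lhom_ext fun p b => by
    show inclAlgHom k pth (toPA k (Finsupp.single p b)) =
      toPA k (incl k ι pth (Finsupp.single p b))
    rw [incl_single, toPA_single, toPA_single, map_smul, inclAlgHom_pathEl]

theorem inclAlgHom_toPA (x : PathSpace k Q) :
    inclAlgHom k pth (toPA k x) = toPA k (incl k ι pth x) :=
  LinearMap.congr_fun (inclAlgHom_comp_toPA k pth) x

end Inclusion

theorem Quiv.PathIdx.exists_eq_comp_arrIdx {Q : Quiv} (p : Q.PathIdx) (hp : p.l.length = 2) :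
    ∃ (a b : Q.A) (h : (Q.arrIdx b).t = (Q.arrIdx a).s),
      p = (Q.arrIdx a).comp (Q.arrIdx b) h := by
  obtain ⟨s, t, l, hl⟩ := p
  obtain ⟨a, b, rfl⟩ := List.length_eq_two.mp hp
  obtain ⟨rfl, h⟩ := hl.cons_elim
  obtain ⟨hab, h'⟩ := h.cons_elim
  obtain rfl := h'.nil_elim
  exact ⟨a, b, hab.symm, rfl⟩

theorem spanPaths_le_spanLen (k : Type) [Field k] (Q : Quiv) (i j : Q.V) (d : ℕ) :
    spanPaths k Q i j d ≤ spanLen k Q d :=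
  Submodule.span_mono (Set.image_mono fun _ hp => hp.2.2)

theorem spanLen_two_le (k : Type) [Field k] {Q : Quiv} {ι : Type} (pth : ι → Q.PathIdx) :
    spanLen k (retQuiv Q pth) 2 ≤
      LinearMap.range (incl k ι pth) ⊔ NN k ι pth ⊔ Submodule.span k (rhoM k ι pth) := by
  refine Submodule.span_le.mpr ?_
  rintro _ ⟨p, hp, rfl⟩
  obtain ⟨a, b, h, rfl⟩ := p.exists_eq_comp_arrIdx hp
  rcases a with a | m <;> rcases b with b | m'
  · refine Submodule.mem_sup_left (Submodule.mem_sup_left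
      ⟨pe k ((Q.arrIdx a).comp (Q.arrIdx b) h), ?_⟩)
    rw [pe, incl_single]
    rfl
  · exact Submodule.mem_sup_left (Submodule.mem_sup_right
      (Submodule.subset_span (Or.inl ⟨a, m', h, rfl⟩)))
  · exact Submodule.mem_sup_left (Submodule.mem_sup_right
      (Submodule.subset_span (Or.inr ⟨m, b, h, rfl⟩)))
  · exact Submodule.mem_sup_right (Submodule.subset_span ⟨m, m', h, rfl⟩)

section TrivSqZeroExt

variable {R M : Type} [Ring R] [AddCommGroup M] [Module R M] [Module Rᵐᵒᵖ M]

theorem TrivSqZeroExt.fst_mul_inr_mul (x y : TrivSqZeroExt R M) (m : M) :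
    TrivSqZeroExt.fst (x * TrivSqZeroExt.inr m * y) = 0 := by
  simp [TrivSqZeroExt.fst_mul]

theorem TrivSqZeroExt.fst_inr_mul_mul (x y : TrivSqZeroExt R M) (m : M) :
    TrivSqZeroExt.fst (TrivSqZeroExt.inr m * x * y) = 0 := by
  simp [TrivSqZeroExt.fst_mul]

end TrivSqZeroExt

section MuSigma

variable {k : Type} [Field k] {Q : Quiv} [Fintype Q.V] {ρ : Set (PathSpace k Q)} {ι : Type}
  {pth : ι → Q.PathIdx} {pstar : ι → (BoundAlg k Q ρ →ₗ[k] k)}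
  {σ : BoundAlg k Q ρ →ₐ[k] BoundAlg k Q ρ}
  {μ : PathAlg k (retQuiv Q pth) →ₐ[k] TwTrivExt k (BoundAlg k Q ρ) σ}

theorem IsMuSigma.comp_inclAlgHom (hμ : IsMuSigma k ρ pth pstar σ μ) :
    μ.comp (inclAlgHom k pth) =
      (TrivSqZeroExt.inlAlgHom k (BoundAlg k Q ρ) (DualTw k (BoundAlg k Q ρ) σ)).comp
        (mkB k Q ρ) := by
  refine RingQuot.ringQuot_ext' _ _ _ (FreeAlgebra.hom_ext (funext fun x => ?_))
  rcases x with i | a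
  · exact (congrArg μ (inclAlgHom_vtx k pth i)).trans
      ((hμ.1 i).trans (by rw [mkL_pe_trivIdx]; rfl))
  · exact (congrArg μ (inclAlgHom_arr k pth a)).trans
      ((hμ.2.1 a).trans (by rw [mkL_pe_arrIdx]; rfl))

theorem IsMuSigma.map_toPA_incl (hμ : IsMuSigma k ρ pth pstar σ μ) (x : PathSpace k Q) :
    μ (toPA k (incl k ι pth x)) = TwTrivExt.inl k σ (mkL k Q ρ x) := by
  rw [← inclAlgHom_toPA]
  exact AlgHom.congr_fun hμ.comp_inclAlgHom (toPA k x)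

theorem IsMuSigma.map_toPA_incl_eq_zero (hμ : IsMuSigma k ρ pth pstar σ μ) {x : PathSpace k Q}
    (hx : x ∈ ρ) : μ (toPA k (incl k ι pth x)) = 0 := by
  rw [hμ.map_toPA_incl, mkL_eq_zero_of_mem k hx]
  exact TrivSqZeroExt.inl_zero _

theorem IsMuSigma.span_rhoM_le_ker (hμ : IsMuSigma k ρ pth pstar σ μ) :
    Submodule.span k (rhoM k ι pth) ≤ LinearMap.ker (μ.toLinearMap ∘ₗ toPA k) := by
  refine Submodule.span_le.mpr ?_
  rintro _ ⟨m, m', h, rfl⟩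
  show μ (toPA k (pe k _)) = 0
  unfold betaIdx
  rw [toPA_pe, pathEl_comp_arrIdx k (Q := retQuiv Q pth) (Sum.inr m) (Sum.inr m') h,
    map_mul, map_mul, hμ.2.2 m, hμ.2.2 m']
  erw [TrivSqZeroExt.inr_mul_inr, zero_mul]

theorem IsMuSigma.nn_le_ker_fst (hμ : IsMuSigma k ρ pth pstar σ μ) :
    NN k ι pth ≤ LinearMap.ker
      ((TrivSqZeroExt.fstHom k (BoundAlg k Q ρ) (DualTw k (BoundAlg k Q ρ) σ)).toLinearMap ∘ₗ
        μ.toLinearMap ∘ₗ toPA k) := by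
  refine Submodule.span_le.mpr ?_
  rintro _ (⟨a, m, h, rfl⟩ | ⟨m, a, h, rfl⟩) <;> show TrivSqZeroExt.fst (μ (toPA k (pe k _))) = 0
  all_goals unfold alIdx betaIdx
  · rw [toPA_pe, pathEl_comp_arrIdx k (Q := retQuiv Q pth) (Sum.inl a) (Sum.inr m) h,
      map_mul, map_mul, hμ.2.2 m]
    exact TrivSqZeroExt.fst_mul_inr_mul _ _ _
  · rw [toPA_pe, pathEl_comp_arrIdx k (Q := retQuiv Q pth) (Sum.inr m) (Sum.inl a) h,
      map_mul, map_mul, hμ.2.2 m]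
    exact TrivSqZeroExt.fst_inr_mul_mul _ _ _

end MuSigma

section Relations

variable {k : Type} [Field k] {Q : Quiv} [Fintype Q.V] {ρ : Set (PathSpace k Q)} {ι : Type}
  {pth : ι → Q.PathIdx}

theorem mk_toPA_incl_eq_zero {T : Set (PathSpace k (retQuiv Q pth))}
    (hT : incl k ι pth '' ρ ⊆ T) {x : PathSpace k Q} (hx : mkL k Q ρ x = 0) :
    RingQuot.mkAlgHom k (quotRel (toPA k '' T)) (toPA k (incl k ι pth x)) = 0 := by
  have hρ : ∀ ⦃a b : PathAlg k Q⦄, quotRel (toPA k '' ρ) a b →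
      ((RingQuot.mkAlgHom k (quotRel (toPA k '' T))).comp (inclAlgHom k pth)) a =
      ((RingQuot.mkAlgHom k (quotRel (toPA k '' T))).comp (inclAlgHom k pth)) b := by
    rintro _ _ ⟨⟨z, hz, rfl⟩, rfl⟩
    rw [map_zero, AlgHom.comp_apply, inclAlgHom_toPA]
    exact mkAlgHom_quotRel_eq_zero ⟨_, hT ⟨z, hz, rfl⟩, rfl⟩
  rw [← inclAlgHom_toPA]
  exact (RingQuot.liftAlgHom_mkAlgHom_apply k _ hρ (toPA k x)).symm.trans
    ((congrArg _ hx).trans (map_zero _))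

variable {pstar : ι → (BoundAlg k Q ρ →ₗ[k] k)} {σ : BoundAlg k Q ρ →ₐ[k] BoundAlg k Q ρ}
  {μ : PathAlg k (retQuiv Q pth) →ₐ[k] TwTrivExt k (BoundAlg k Q ρ) σ}

theorem IsMuSigma.mk_toPA_eq_zero_of_mem_spanLen_two (hμ : IsMuSigma k ρ pth pstar σ μ)
    {ρ₀ : Set (PathSpace k (retQuiv Q pth))}
    (hρ₀ : LinearMap.ker (μ.toLinearMap ∘ₗ toPA k) ⊓ NN k ι pth ≤ Submodule.span k ρ₀)
    {t : PathSpace k (retQuiv Q pth)} (ht : t ∈ spanLen k (retQuiv Q pth) 2)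
    (hμt : μ (toPA k t) = 0) :
    RingQuot.mkAlgHom k (quotRel (toPA k '' (incl k ι pth '' ρ ∪ rhoM k ι pth ∪ ρ₀)))
      (toPA k t) = 0 := by
  set tρ := incl k ι pth '' ρ ∪ rhoM k ι pth ∪ ρ₀
  have hspan : Submodule.span k tρ ≤
      LinearMap.ker ((RingQuot.mkAlgHom k (quotRel (toPA k '' tρ))).toLinearMap ∘ₗ toPA k) :=
    Submodule.span_le.mpr fun r hr => mkAlgHom_quotRel_eq_zero ⟨r, hr, rfl⟩
  obtain ⟨_, hy, z, hz, rfl⟩ := Submodule.mem_sup.mp (spanLen_two_le k pth ht)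
  obtain ⟨_, ⟨u, rfl⟩, x, hx, rfl⟩ := Submodule.mem_sup.mp hy
  have hz0 : μ (toPA k z) = 0 := hμ.span_rhoM_le_ker hz
  have hx0 : TrivSqZeroExt.fst (μ (toPA k x)) = 0 := hμ.nn_le_ker_fst hx
  rw [map_add, map_add, map_add, map_add, hz0, add_zero, hμ.map_toPA_incl] at hμt
  have hu : mkL k Q ρ u = 0 := by
    have := congrArg TrivSqZeroExt.fst hμt
    erw [TrivSqZeroExt.fst_add, TrivSqZeroExt.fst_inl, hx0, add_zero] at this
    exact this
  have hx' : μ (toPA k x) = 0 := by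
    rw [hu, TwTrivExt.inl, TrivSqZeroExt.inl_zero] at hμt
    exact (zero_add _).symm.trans hμt
  show _ ∈ LinearMap.ker ((RingQuot.mkAlgHom k (quotRel (toPA k '' tρ))).toLinearMap ∘ₗ toPA k)
  refine add_mem (add_mem ?_ ?_) ?_
  · exact mk_toPA_incl_eq_zero (fun _ hr => Or.inl (Or.inl hr)) hu
  · exact hspan (Submodule.span_mono Set.subset_union_right (hρ₀ ⟨hx', hx⟩))
  · exact hspan (Submodule.span_mono (Set.subset_union_right.trans Set.subset_union_left) hz)

end Relations

theorem trivial_extension_relations_general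
    (k : Type) [Field k] (n : ℕ) (Q : Quiv) [Fintype Q.V]
    (ρ : Set (PathSpace k Q))
    (M : MaxBasis k Q ρ n) (D : DualData k M.toPieceBasis)
    (μ : PathAlg k (retQuiv Q M.pth) →ₐ[k]
      TwTrivExt k (BoundAlg k Q ρ) (AlgHom.id k (BoundAlg k Q ρ)))
    (hμ : IsMuSigma k ρ M.pth D.pstar (AlgHom.id k (BoundAlg k Q ρ)) μ)
    (hquad : ∃ τ : Set (PathSpace k (retQuiv Q M.pth)),
      IsQuadRelSet k (retQuiv Q M.pth) τ ∧ Presents k μ (toPA k '' τ))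
    (ρ₀ : Set (PathSpace k (retQuiv Q M.pth)))
    (hsp : Submodule.span k ρ₀
      = LinearMap.ker (μ.toLinearMap ∘ₗ toPA k) ⊓ NN k M.ι M.pth) :
    Presents k μ
      (toPA k '' (incl k M.ι M.pth '' ρ ∪ rhoM k M.ι M.pth ∪ ρ₀)) := by
  obtain ⟨τ, hτquad, hτ⟩ := hquad
  refine hτ.of_map_eq_zero_of_mk_eq_zero ?_ ?_
  · rintro _ ⟨r, (⟨x, hx, rfl⟩ | hr) | hr, rfl⟩
    · exact hμ.map_toPA_incl_eq_zero hx
    · exact hμ.span_rhoM_le_ker (Submodule.subset_span hr)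
    · exact (hsp.le (Submodule.subset_span hr)).1
  · rintro _ ⟨t, ht, rfl⟩
    obtain ⟨i, j, ht2⟩ := hτquad t ht
    exact hμ.mk_toPA_eq_zero_of_mem_spanLen_two hsp.ge (spanPaths_le_spanLen k _ i j 2 ht2)
      (hτ.map_eq_zero ⟨t, ht, rfl⟩)

/-- Lemma: the relations of the trivial extension.
Let `Λ = kQ/(ρ)` be an `n`-homogeneous algebra whose trivial extension `ΔΛ` is
quadratic.  Then `ΔΛ ≅ ktQ/(tρ)`, via `μ = μ_id`, where `tρ = ρ ∪ ρ_M ∪ ρ₀`; here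
`ρ_M = {β_p ⊗ β_{p'} | p, p' ∈ M, t(p) = s(p')}` and `ρ₀` is any basis of the kernel
of `μ` restricted to `N = V ⊗ V_M ⊕ V_M ⊗ V`. -/
theorem trivial_extension_relations
    (k : Type) [Field k] (n : ℕ) (Q : Quiv) [Fintype Q.V] [Fintype Q.A]
    (ρ : Set (PathSpace k Q)) (hhom : IsNHomog k Q ρ n)
    (M : MaxBasis k Q ρ n) (D : DualData k M.toPieceBasis)
    (μ : PathAlg k (retQuiv Q M.pth) →ₐ[k]
      TwTrivExt k (BoundAlg k Q ρ) (AlgHom.id k (BoundAlg k Q ρ)))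
    (hμ : IsMuSigma k ρ M.pth D.pstar (AlgHom.id k (BoundAlg k Q ρ)) μ)
    (hquad : ∃ τ : Set (PathSpace k (retQuiv Q M.pth)),
      IsQuadRelSet k (retQuiv Q M.pth) τ ∧ Presents k μ (toPA k '' τ))
    (ρ₀ : Set (PathSpace k (retQuiv Q M.pth)))
    (h₀ : ρ₀ ⊆ ((LinearMap.ker (μ.toLinearMap ∘ₗ toPA k) ⊓ NN k M.ι M.pth :
      Submodule k (PathSpace k (retQuiv Q M.pth))) : Set (PathSpace k (retQuiv Q M.pth))))
    (hind : LinearIndependent k (fun x : ρ₀ => (x : PathSpace k (retQuiv Q M.pth))))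
    (hsp : Submodule.span k ρ₀
      = LinearMap.ker (μ.toLinearMap ∘ₗ toPA k) ⊓ NN k M.ι M.pth) :
    Presents k μ
      (toPA k '' (incl k M.ι M.pth '' ρ ∪ rhoM k M.ι M.pth ∪ ρ₀)) :=
  trivial_extension_relations_general k n Q ρ M D μ hμ hquad ρ₀ hsp

end TEPP
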